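/- For each weakly decreasing integer tuple f = (f_1,…,f_m), the map w ↦ γ̲_w is a bijection from the set of standard words w of total length r with f_w = f onto the set 𝒦^s_{f*}(r) of standard Kleshchev multipartitions of r relative to f* = (−f_m,…,−f_1). -/

import Mathlib

/-- An integral segment: a pair `(i, j)` of integers (proper when `i ≤ j`). -/
abbrev Seg := ℤ × ℤ

/-- The length `j - i + 1` of a segment. -/
def segLen (s : Seg) : ℤ := s.2 - s.1 + 1

/-- A standard word of total length `r`: a nonempty sequence of integral segments whose
upper endpoints weakly increase, such that lower endpoints weakly decrease on ties,
of total length `r`. -/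
def IsStandardWord (r : ℕ) (w : List Seg) : Prop :=
  w ≠ [] ∧ (∀ s ∈ w, s.1 ≤ s.2) ∧
  w.Chain' (fun p q => p.2 ≤ q.2 ∧ (p.2 = q.2 → q.1 ≤ p.1)) ∧
  (w.map segLen).sum = (r : ℤ)

/-- Number of further segments continuing the chain started at `p`:
consecutive upper endpoints increase by exactly 1 and lower endpoints strictly increase. -/
def chainLen : Seg → List Seg → ℕ
  | _, [] => 0
  | p, q :: rest => if q.2 = p.2 + 1 ∧ p.1 < q.1 then chainLen q rest + 1 else 0

/-- The block decomposition of a word into maximal chains. -/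
def blocks : List Seg → List (List Seg)
  | [] => []
  | p :: rest =>
      (p :: rest.take (chainLen p rest)) :: blocks (rest.drop (chainLen p rest))
termination_by w => w.length
decreasing_by
  simp only [List.length_drop, List.length_cons]
  omega

/-- `γ̲_w`: the multipartition attached to a word by the block decomposition. -/
def gammaOf (w : List Seg) : List (List ℕ) :=
  (blocks w).map (fun b => b.map (fun s => (segLen s).toNat))

/-- `f_w`: the tuple of upper endpoints of the first segments of the blocks,
in reversed block order (so `f_m = j_1`). -/
def fOf (w : List Seg) : List ℤ :=
  ((blocks w).map (fun b => (b.headI).2)).reverse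

/-- A partition: a weakly decreasing list of positive integers. -/
def IsPartition (p : List ℕ) : Prop := p.Pairwise (· ≥ ·) ∧ ∀ x ∈ p, 0 < x

/-- The `j`-th part of a partition (1-based), with the convention `p_j = 0` for `j > ℓ(p)`. -/
def part (p : List ℕ) (j : ℕ) : ℕ := p.getD (j - 1) 0

/-- The `a`-th entry of an integer tuple (1-based). -/
def fpart (f : List ℤ) (a : ℕ) : ℤ := f.getD (a - 1) 0

/-- The `a`-th component of a multipartition (1-based). -/
def mpart (γ : List (List ℕ)) (a : ℕ) : List ℕ := γ.getD (a - 1) []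

/-- A multipartition of `r`: a tuple of partitions of total size `r`. -/
def IsMultipartition (r : ℕ) (γ : List (List ℕ)) : Prop :=
  (∀ p ∈ γ, IsPartition p) ∧ (γ.map List.sum).sum = r

/-- `f* = (−f_m, …, −f_1)`. -/
def fstar (f : List ℤ) : List ℤ := (f.map (fun x => -x)).reverse

/-- Kleshchev multipartition relative to a weakly decreasing integer tuple `g`:
`γ^{(k)}_{j + g_k − g_{k+1}} ≤ γ^{(k+1)}_j` for all `j ≥ 1` and `1 ≤ k ≤ m−1`. -/
def IsKleshchev (g : List ℤ) (γ : List (List ℕ)) : Prop :=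
  ∀ k j, 1 ≤ k → k ≤ g.length - 1 → 1 ≤ j →
    part (mpart γ k) (j + (fpart g k - fpart g (k + 1)).toNat) ≤ part (mpart γ (k + 1)) j

/-- Standard Kleshchev multipartition of `r` relative to `f`: conditions (SK1)–(SK3). -/
def IsStandardKleshchev (r : ℕ) (f : List ℤ) (γ : List (List ℕ)) : Prop :=
  γ.length = f.length ∧
  IsMultipartition r γ ∧
  (∀ a, 1 ≤ a → a ≤ γ.length → mpart γ a ≠ []) ∧
  (∀ a, 1 ≤ a → a ≤ f.length - 1 →
    ((mpart γ a).length : ℤ) ≤ (fpart f a - fpart f (a + 1)) + 1 ∧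
    part (mpart γ a) ((fpart f a - fpart f (a + 1)).toNat + 1) ≤ part (mpart γ (a + 1)) 1) ∧
  (∀ a, 1 ≤ a → a ≤ f.length - 1 →
    ((mpart γ a).length : ℤ) = fpart f a - fpart f (a + 1) →
    (part (mpart γ a) ((fpart f a - fpart f (a + 1)).toNat) : ℤ) ≤
      (part (mpart γ (a + 1)) 1 : ℤ) - 1)

/-- `λ′_j = #{a : λ_a ≥ j}`. -/
def conjCount (p : List ℕ) (j : ℕ) : ℕ := (p.filter (fun x => j ≤ x)).length

/-- The conjugate partition, as a list of length `λ_1`. -/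
def conjList (p : List ℕ) : List ℕ := (List.range p.headI).map (fun j0 => conjCount p (j0 + 1))

/-- `λ̲′ = (λ^{(m)′}, …, λ^{(1)′})`. -/
def conjMulti (γ : List (List ℕ)) : List (List ℕ) := (γ.map conjList).reverse

/-- Column residual segments of a single partition with parameter `fk`:
the `j`-th one is `(f_k + j − λ′_j, f_k + j − 1)`, for `j = 1, …, λ_1`. -/
def colSegs (fk : ℤ) (p : List ℕ) : List Seg :=
  (List.range p.headI).map (fun (j0 : ℕ) =>
    (fk + (j0 : ℤ) + 1 - (conjCount p (j0 + 1) : ℤ), fk + (j0 : ℤ)))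

/-- Column reading `s^c_{λ̲;f}`: components `k = m, …, 1`, columns `j = 1, …, λ^{(k)}_1`. -/
def colReading (f : List ℤ) (lam : List (List ℕ)) : List Seg :=
  (((lam.zip f).reverse).map (fun pk => colSegs pk.2 pk.1)).flatten

/-- Row residual segments of a single partition with parameter `fk`:
the `i`-th one is `(f_k + 1 − i, f_k + λ_i − i)`, for `i = 1, …, ℓ(λ)`. -/
def rowSegs (fk : ℤ) (p : List ℕ) : List Seg :=
  (List.range p.length).map (fun (i0 : ℕ) =>
    (fk - (i0 : ℤ), fk + ((p.getD i0 0 : ℕ) : ℤ) - (i0 : ℤ) - 1))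

/-- Row reading `s^r_{λ̲;f}`: components `k = 1, …, m`, rows `i = 1, …, ℓ(λ^{(k)})`. -/
def rowReading (f : List ℤ) (lam : List (List ℕ)) : List Seg :=
  ((lam.zip f).map (fun pk => rowSegs pk.2 pk.1)).flatten

/-- The inverse of a segment: `(i, j) ↦ (−j, −i)`. -/
def segInv (s : Seg) : Seg := (-s.2, -s.1)

/-- The word attached to a tuple `f` and a multipartition `γ`:
for each `a = 1, …, m` and `b = 1, …, ℓ(γ^{(a)})` the segment
`(f_{m−a+1} − γ^{(a)}_b + b, f_{m−a+1} + b − 1)`. -/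
def wordOf (f : List ℤ) (γ : List (List ℕ)) : List Seg :=
  ((List.range γ.length).map (fun a0 =>
    (List.range (γ.getD a0 []).length).map (fun b0 =>
      (f.getD (f.length - 1 - a0) 0 - ((γ.getD a0 []).getD b0 0 : ℤ) + (b0 + 1 : ℤ),
       f.getD (f.length - 1 - a0) 0 + (b0 : ℤ))))).flatten


/-- The `i`-th Drinfeld polynomial of a multiset of integral segments:
`Q_i(x) = ∏_{b : |s_b| ≥ i} (1 − q^{2(j_b + 1 − i)} x)`. -/
noncomputable def drinfeld (q : ℂ) (s : Multiset Seg) (i : ℕ) : Polynomial ℂ :=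
  ((s.filter (fun p => (i : ℤ) ≤ segLen p)).map
    (fun p => 1 - Polynomial.C (q ^ (2 * (p.2 + 1 - (i : ℤ)))) * Polynomial.X)).prod

/-- The column segments of the skew shape `λ/ν`: one segment
`(j − λ′_j, j − ν′_j − 1)` for each column `j` with `λ′_j > ν′_j`. -/
def skewSegList (lam nu : List ℕ) : List Seg :=
  ((List.range lam.headI).filter (fun j0 => conjCount nu (j0 + 1) < conjCount lam (j0 + 1))).map
    (fun (j0 : ℕ) => ((j0 : ℤ) + 1 - (conjCount lam (j0 + 1) : ℤ),
      (j0 : ℤ) - (conjCount nu (j0 + 1) : ℤ)))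

/-- A cell of the Young diagram of `λ` (1-based coordinates). -/
def IsYCell (lam : List ℕ) (a b : ℕ) : Prop := 1 ≤ a ∧ 1 ≤ b ∧ b ≤ part lam a

/-- A cell of the skew shape `λ/ν` (1-based coordinates). -/
def IsSkewCell (lam nu : List ℕ) (a b : ℕ) : Prop := 1 ≤ a ∧ part nu a < b ∧ b ≤ part lam a

instance (lam nu : List ℕ) (a b : ℕ) : Decidable (IsSkewCell lam nu a b) := by
  unfold IsSkewCell; infer_instance

/-- A semistandard skew tableau of shape `λ/ν`, encoded as a function on 1-based coordinates
vanishing outside the shape, with positive entries weakly increasing along rows and strictly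
increasing down columns. -/
def IsSSSkewTableau (lam nu : List ℕ) (T : ℕ → ℕ → ℕ) : Prop :=
  (∀ a b, ¬ IsSkewCell lam nu a b → T a b = 0) ∧
  (∀ a b, IsSkewCell lam nu a b → 1 ≤ T a b) ∧
  (∀ a b, IsSkewCell lam nu a b → IsSkewCell lam nu a (b + 1) → T a b ≤ T a (b + 1)) ∧
  (∀ a b, IsSkewCell lam nu a b → IsSkewCell lam nu (a + 1) b → T a b < T (a + 1) b)

/-- Number of cells of `λ/ν` where `T` takes the value `i`. -/
def entryCount (lam nu : List ℕ) (T : ℕ → ℕ → ℕ) (i : ℕ) : ℕ :=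
  ((Finset.range (lam.length + 1) ×ˢ Finset.range (lam.headI + 1)).filter
    (fun ab => IsSkewCell lam nu ab.1 ab.2 ∧ T ab.1 ab.2 = i)).card

/-- The reverse reading word of a skew tableau: each row right to left, rows top to bottom. -/
def rword (lam nu : List ℕ) (T : ℕ → ℕ → ℕ) : List ℕ :=
  ((List.range lam.length).map (fun a0 =>
    (List.range (part lam (a0 + 1) - part nu (a0 + 1))).map
      (fun k => T (a0 + 1) (part lam (a0 + 1) - k)))).flatten

/-- A lattice word: in every prefix, `i` occurs at least as often as `i + 1`, for all `i ≥ 1`. -/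
def IsLatticeWord (L : List ℕ) : Prop :=
  ∀ n i, 1 ≤ i → (L.take n).count (i + 1) ≤ (L.take n).count i

/-- `ρ_i = #{j : λ′_j − ν′_j ≥ i}`. -/
def rhoVal (lam nu : List ℕ) (i : ℕ) : ℕ :=
  ((Finset.range lam.headI).filter
    (fun j0 => i + conjCount nu (j0 + 1) ≤ conjCount lam (j0 + 1))).card

/-- `t^λ(a,b) = λ_1 + ⋯ + λ_{a−1} + b`: the row-by-row enumeration of the cells of `λ`. -/
def rowIdx (lam : List ℕ) (a b : ℕ) : ℕ := (lam.take (a - 1)).sum + b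

/-- `t_λ(a,b) = λ′_1 + ⋯ + λ′_{b−1} + a`: the column-by-column enumeration of the cells of `λ`. -/
def colIdx (lam : List ℕ) (a b : ℕ) : ℕ := ((conjList lam).take (b - 1)).sum + a

/-- A cell of the Young diagram of a multipartition: component `k`, row `a`, column `b`. -/
def IsMCell (lam : List (List ℕ)) (k a b : ℕ) : Prop :=
  1 ≤ k ∧ k ≤ lam.length ∧ IsYCell (lam.getD (k - 1) []) a b

/-- `t^{λ̲}`: row-by-row enumeration, components in order `1, …, m`. -/
def mRowIdx (lam : List (List ℕ)) (k a b : ℕ) : ℕ :=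
  ((lam.take (k - 1)).map List.sum).sum + rowIdx (lam.getD (k - 1) []) a b

/-- `t_{λ̲}`: column-by-column enumeration, components in order `m, …, 1`. -/
def mColIdx (lam : List (List ℕ)) (k a b : ℕ) : ℕ :=
  ((lam.drop k).map List.sum).sum + colIdx (lam.getD (k - 1) []) a b

/-!
A standard word splits uniquely into maximal blocks in which each upper endpoint exceeds the
previous one by `1` and the lower endpoints strictly increase. Such a block is determined by the
upper endpoint `h` of its first segment and by its sequence of lengths, which is then a
nonempty partition, and every such pair `(h, partition)` occurs. A word is thus the same as a
list of pairs `(h_a, γ^{(a)})`, where the `h_a` read backwards form `f_w`, and the two conditions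
left at each junction of adjacent blocks (the upper endpoints do not decrease, and the second
block does not continue the first) say exactly (SK2) and (SK3) for `γ^{(a)}, γ^{(a+1)}` with
gap `h_{a+1} - h_a`.
-/

lemma List.isChain_and_iff {α : Type*} {R S : α → α → Prop} {l : List α} :
    l.IsChain (fun a b => R a b ∧ S a b) ↔ l.IsChain R ∧ l.IsChain S := by
  simp only [List.isChain_iff_getElem]
  exact ⟨fun h => ⟨fun i hi => (h i hi).1, fun i hi => (h i hi).2⟩,
    fun h i hi => ⟨h.1 i hi, h.2 i hi⟩⟩

lemma List.head?_flatten_of_mem_head? {α : Type*} {L : List (List α)} {C : List α}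
    (hC : C ∈ L.head?) (hne : C ≠ []) : L.flatten.head? = C.head? := by
  cases L with
  | nil => simp at hC
  | cons C' L =>
    obtain rfl : C' = C := by simpa using hC
    obtain ⟨c, t, rfl⟩ := List.exists_cons_of_ne_nil hne
    simp

def ChainStep (p q : Seg) : Prop := q.2 = p.2 + 1 ∧ p.1 < q.1

def StdLE (p q : Seg) : Prop := p.2 ≤ q.2 ∧ (p.2 = q.2 → q.1 ≤ p.1)

lemma ChainStep.stdLE {p q : Seg} (h : ChainStep p q) : StdLE p q := by
  obtain ⟨h₁, h₂⟩ := h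
  exact ⟨by omega, fun _ => by omega⟩

lemma isStandardWord_iff (r : ℕ) (w : List Seg) :
    IsStandardWord r w ↔
      w ≠ [] ∧ (∀ s ∈ w, s.1 ≤ s.2) ∧ w.IsChain StdLE ∧ (w.map segLen).sum = r :=
  Iff.rfl

def IsBlockDecomp (L : List (List Seg)) : Prop :=
  (∀ B ∈ L, B ≠ [] ∧ B.IsChain ChainStep) ∧
    L.IsChain fun B C => ∀ p ∈ B.getLast?, ∀ q ∈ C.head?, ¬ ChainStep p q

lemma isChain_cons_take_chainLen (p : Seg) (rest : List Seg) :
    (p :: rest.take (chainLen p rest)).IsChain ChainStep := by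
  induction rest generalizing p with
  | nil => simp
  | cons q t ih =>
    simp only [chainLen]
    split_ifs with h
    · exact List.IsChain.cons_cons h (ih q)
    · simp

lemma not_chainStep_take_drop_chainLen (p : Seg) (rest : List Seg) :
    ∀ x ∈ (p :: rest.take (chainLen p rest)).getLast?,
      ∀ q ∈ (rest.drop (chainLen p rest)).head?, ¬ ChainStep x q := by
  induction rest generalizing p with
  | nil => simp
  | cons q t ih =>
    simp only [chainLen]
    split_ifs with h
    · simpa only [List.take_succ_cons, List.drop_succ_cons, List.getLast?_cons_cons] using ih q
    · simpa [ChainStep] using h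

lemma chainLen_append (p : Seg) (t rest : List Seg) (hc : (p :: t).IsChain ChainStep)
    (hb : ∀ x ∈ (p :: t).getLast?, ∀ q ∈ rest.head?, ¬ ChainStep x q) :
    chainLen p (t ++ rest) = t.length := by
  induction t generalizing p with
  | nil =>
    cases rest with
    | nil => rfl
    | cons q rest => simpa [chainLen, ChainStep] using hb
  | cons q t ih =>
    rw [List.isChain_cons_cons] at hc
    rw [List.getLast?_cons_cons] at hb
    simp only [List.cons_append, chainLen, ih q hc.2 hb, List.length_cons]
    exact if_pos hc.1

lemma blocks_cons_append (p : Seg) (t rest : List Seg) (hc : (p :: t).IsChain ChainStep)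
    (hb : ∀ x ∈ (p :: t).getLast?, ∀ q ∈ rest.head?, ¬ ChainStep x q) :
    blocks (p :: (t ++ rest)) = (p :: t) :: blocks rest := by
  rw [blocks, chainLen_append p t rest hc hb, List.take_left, List.drop_left]

lemma flatten_blocks (w : List Seg) : (blocks w).flatten = w := by
  induction w using blocks.induct with
  | case1 => simp [blocks]
  | case2 p rest ih => rw [blocks]; simp [ih]

lemma isBlockDecomp_blocks (w : List Seg) : IsBlockDecomp (blocks w) := by
  induction w using blocks.induct with
  | case1 => simp [blocks, IsBlockDecomp]
  | case2 p rest ih =>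
    obtain ⟨hB, hL⟩ := ih
    rw [blocks]
    refine ⟨?_, List.isChain_cons.mpr ⟨?_, hL⟩⟩
    · intro B hB'
      rcases List.mem_cons.mp hB' with rfl | hB'
      · exact ⟨List.cons_ne_nil _ _, isChain_cons_take_chainLen p rest⟩
      · exact hB B hB'
    · intro C hC x hx q hq
      refine not_chainStep_take_drop_chainLen p rest x hx q ?_
      rw [← flatten_blocks (rest.drop _), List.head?_flatten_of_mem_head? hC (hB C ?_).1]
      · exact hq
      · exact List.mem_of_mem_head? hC

lemma blocks_flatten {L : List (List Seg)} (hL : IsBlockDecomp L) : blocks L.flatten = L := by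
  induction L with
  | nil => simp [blocks]
  | cons B L ih =>
    obtain ⟨hB, hL⟩ := hL
    obtain ⟨p, t, rfl⟩ := List.exists_cons_of_ne_nil (hB B List.mem_cons_self).1
    rw [List.isChain_cons] at hL
    rw [List.flatten_cons, List.cons_append, blocks_cons_append p t _
      (hB _ List.mem_cons_self).2, ih ⟨fun C hC => hB C (List.mem_cons_of_mem _ hC), hL.2⟩]
    intro x hx q hq
    obtain ⟨C, hC⟩ : ∃ C, C ∈ L.head? := by cases L <;> simp_all
    have hCne := (hB C (List.mem_cons_of_mem _ (List.mem_of_mem_head? hC))).1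
    rw [List.head?_flatten_of_mem_head? hC hCne] at hq
    exact hL.1 C hC x hx q hq

def blockOf : ℤ → List ℕ → List Seg
  | _, [] => []
  | h, c :: g => (h + 1 - c, h) :: blockOf (h + 1) g

def segLengths (B : List Seg) : List ℕ := B.map fun s => (segLen s).toNat

lemma blockOf_eq_map_range (h : ℤ) (g : List ℕ) :
    blockOf h g =
      (List.range g.length).map fun b => (h - (g.getD b 0 : ℤ) + (b + 1 : ℤ), h + b) := by
  induction g generalizing h with
  | nil => rfl
  | cons c g ih =>
    rw [blockOf, ih, List.length_cons, List.range_succ_eq_map, List.map_cons, List.map_map]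
    congr 1
    · simp only [List.getD_cons_zero, Nat.cast_zero, Prod.mk.injEq]
      constructor <;> ring
    · refine List.map_congr_left fun b _ => ?_
      simp only [Function.comp_apply, List.getD_cons_succ, Prod.mk.injEq]
      constructor <;> push_cast <;> ring

lemma blockOf_eq_nil_iff {h : ℤ} {g : List ℕ} : blockOf h g = [] ↔ g = [] := by
  cases g <;> simp [blockOf]

lemma map_segLen_blockOf (h : ℤ) (g : List ℕ) : (blockOf h g).map segLen = g.map (↑) := by
  induction g generalizing h with
  | nil => rfl
  | cons c g ih => simp only [blockOf, List.map_cons, ih, segLen]; congr 1; ring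

lemma segLengths_blockOf (h : ℤ) (g : List ℕ) : segLengths (blockOf h g) = g := by
  calc segLengths (blockOf h g) = ((blockOf h g).map segLen).map Int.toNat := by
        simp [segLengths]
    _ = g := by simp [map_segLen_blockOf, Function.comp_def]

lemma headI_blockOf_snd (h : ℤ) {g : List ℕ} (hg : g ≠ []) : (blockOf h g).headI.2 = h := by
  obtain ⟨c, g, rfl⟩ := List.exists_cons_of_ne_nil hg
  rfl

lemma getLast?_blockOf (h : ℤ) {g : List ℕ} (hg : g ≠ []) :
    (blockOf h g).getLast? = some (h + g.length - g.getLast hg, h + g.length - 1) := by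
  induction g generalizing h with
  | nil => contradiction
  | cons c g ih =>
    cases g with
    | nil => simp [blockOf]
    | cons c' g =>
      rw [blockOf, List.getLast?_cons, ih (h + 1) (List.cons_ne_nil _ _), List.getLast_cons_cons]
      simp only [Option.getD_some, List.length_cons, Nat.cast_add, Nat.cast_one, Option.some.injEq,
        Prod.mk.injEq]
      constructor <;> ring

lemma le_of_mem_blockOf {h : ℤ} {g : List ℕ} (hg : ∀ c ∈ g, 0 < c) {s : Seg}
    (hs : s ∈ blockOf h g) : s.1 ≤ s.2 := by
  induction g generalizing h with
  | nil => simp [blockOf] at hs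
  | cons c g ih =>
    rcases List.mem_cons.mp hs with rfl | hs
    · have := hg c List.mem_cons_self
      simp only
      omega
    · exact ih (fun c hc => hg c (List.mem_cons_of_mem _ hc)) hs

lemma isChain_blockOf (h : ℤ) {g : List ℕ} (hg : g.IsChain (· ≥ ·)) :
    (blockOf h g).IsChain ChainStep := by
  induction g generalizing h with
  | nil => exact List.IsChain.nil
  | cons c g ih =>
    cases g with
    | nil => exact List.IsChain.singleton _
    | cons c' g =>
      rw [List.isChain_cons_cons] at hg
      refine List.IsChain.cons_cons ⟨rfl, ?_⟩ (ih (h + 1) hg.2)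
      have : c' ≤ c := hg.1
      simp only
      omega

lemma blockOf_headI_segLengths {B : List Seg} (hB : B ≠ []) (hc : B.IsChain ChainStep)
    (hp : ∀ s ∈ B, s.1 ≤ s.2) : blockOf B.headI.2 (segLengths B) = B := by
  induction B with
  | nil => contradiction
  | cons p B ih =>
    have hlen : ((segLen p).toNat : ℤ) = p.2 - p.1 + 1 := by
      have := hp p List.mem_cons_self
      rw [segLen]
      omega
    simp only [segLengths, List.map_cons, blockOf, List.headI_cons, hlen]
    congr 1
    · exact Prod.ext (by simp only; ring) rfl
    · cases B with
      | nil => rfl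
      | cons q B =>
        rw [List.isChain_cons_cons] at hc
        rw [← hc.1.1]
        exact ih (List.cons_ne_nil _ _) hc.2 fun s hs => hp s (List.mem_cons_of_mem _ hs)

lemma isPartition_segLengths {B : List Seg} (hc : B.IsChain ChainStep)
    (hp : ∀ s ∈ B, s.1 ≤ s.2) : IsPartition (segLengths B) := by
  refine ⟨?_, ?_⟩
  · rw [← List.isChain_iff_pairwise, segLengths, List.isChain_map]
    refine hc.imp fun p q hpq => ?_
    obtain ⟨h₁, h₂⟩ := hpq
    simp only [segLen, ge_iff_le]
    omega
  · intro c hc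
    obtain ⟨s, hs, rfl⟩ := List.mem_map.mp hc
    have := hp s hs
    simp only [segLen]
    omega

/-- (SK2) and (SK3) at a single index `a`, with `d = g_a - g_{a+1}`, `g = γ^{(a)}` and
`g' = γ^{(a+1)}`. -/
def KleshchevBoundary (d : ℤ) (g g' : List ℕ) : Prop :=
  (g.length : ℤ) ≤ d + 1 ∧ part g (d.toNat + 1) ≤ part g' 1 ∧
    ((g.length : ℤ) = d → (part g d.toNat : ℤ) ≤ part g' 1 - 1)

lemma junction_blockOf_iff (h h' : ℤ) {g g' : List ℕ} (hg : g ≠ []) (hg' : g' ≠ []) :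
    ((∀ p ∈ (blockOf h g).getLast?, ∀ q ∈ (blockOf h' g').head?, StdLE p q) ∧
        ∀ p ∈ (blockOf h g).getLast?, ∀ q ∈ (blockOf h' g').head?, ¬ ChainStep p q) ↔
      KleshchevBoundary (h' - h) g g' := by
  obtain ⟨c', g', rfl⟩ := List.exists_cons_of_ne_nil hg'
  have hlast : ∀ k, k + 1 = g.length → g.getD k 0 = g.getLast hg := by
    intro k hk
    rw [List.getLast_eq_getElem, List.getD_eq_getElem _ _ (by omega)]
    congr 1
    omega
  have hout : ∀ k, g.length ≤ k → g.getD k 0 = 0 := fun k hk => List.getD_eq_default _ _ hk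
  have hpos : 0 < g.length := List.length_pos_iff.mpr hg
  simp only [getLast?_blockOf h hg, blockOf, List.head?_cons, Option.mem_def, Option.some.injEq,
    forall_eq', StdLE, ChainStep, KleshchevBoundary, part,
    Nat.add_sub_cancel, Nat.sub_self, List.getD_cons_zero]
  constructor
  · rintro ⟨⟨h₁, h₂⟩, h₃⟩
    refine ⟨by omega, ?_, fun hd => ?_⟩
    · by_cases hd : (g.length : ℤ) = h' - h + 1
      · rw [hlast _ (by omega)]
        have := h₂ (by omega)
        omega
      · rw [hout _ (by omega)]
        exact Nat.zero_le _
    · rw [hlast _ (by omega)]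
      omega
  · rintro ⟨h₁, h₂, h₃⟩
    refine ⟨⟨by omega, fun hd => ?_⟩, fun hd => ?_⟩
    · rw [hlast _ (by omega)] at h₂
      omega
    · have := h₃ (by omega)
      rw [hlast _ (by omega)] at this
      omega

lemma fpart_succ {g : List ℤ} {i : ℕ} (hi : i < g.length) : fpart g (i + 1) = g[i] := by
  rw [fpart, Nat.add_sub_cancel, List.getD_eq_getElem _ _ hi]

lemma mpart_succ {γ : List (List ℕ)} {i : ℕ} (hi : i < γ.length) :
    mpart γ (i + 1) = γ[i] := by
  rw [mpart, Nat.add_sub_cancel, List.getD_eq_getElem _ _ hi]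

lemma isStandardKleshchev_iff (r : ℕ) (g : List ℤ) (γ : List (List ℕ)) :
    IsStandardKleshchev r g γ ↔ γ.length = g.length ∧ IsMultipartition r γ ∧ [] ∉ γ ∧
      (g.zip γ).IsChain fun x y => KleshchevBoundary (x.1 - y.1) x.2 y.2 := by
  unfold IsStandardKleshchev
  refine and_congr_right fun hlen => and_congr_right fun _ => and_congr ?_ ?_
  · constructor
    · intro h hmem
      obtain ⟨i, hi, hγi⟩ := List.getElem_of_mem hmem
      exact h (i + 1) (by omega) (by omega) (by rw [mpart_succ hi, hγi])
    · intro h a ha₁ ha₂ hnil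
      obtain ⟨i, rfl⟩ : ∃ i, a = i + 1 := ⟨a - 1, by omega⟩
      rw [mpart_succ (by omega)] at hnil
      exact h (hnil ▸ List.getElem_mem _)
  · have hz : (g.zip γ).length = g.length := by simp [hlen]
    have shift : ∀ i (hi : i + 1 < (g.zip γ).length),
        KleshchevBoundary (fpart g (i + 1) - fpart g (i + 1 + 1)) (mpart γ (i + 1))
            (mpart γ (i + 1 + 1)) ↔
          KleshchevBoundary ((g.zip γ)[i].1 - (g.zip γ)[i + 1].1) (g.zip γ)[i].2
            (g.zip γ)[i + 1].2 := by
      intro i hi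
      rw [fpart_succ (by omega), fpart_succ (by omega), mpart_succ (by omega),
        mpart_succ (by omega), List.getElem_zip, List.getElem_zip]
    rw [List.isChain_iff_getElem]
    constructor
    · rintro ⟨h₂, h₃⟩ i hi
      rw [← shift i hi]
      exact ⟨(h₂ (i + 1) (by omega) (by omega)).1, (h₂ (i + 1) (by omega) (by omega)).2,
        h₃ (i + 1) (by omega) (by omega)⟩
    · intro h
      refine ⟨fun a ha₁ ha₂ => ?_, fun a ha₁ ha₂ => ?_⟩ <;>
        obtain ⟨i, rfl⟩ : ∃ i, a = i + 1 := ⟨a - 1, by omega⟩ <;>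
        have hi := (shift i (by omega)).mpr (h i (by omega))
      exacts [⟨hi.1, hi.2.1⟩, hi.2.2]

lemma isStandardKleshchev_fstar_iff (r : ℕ) (f : List ℤ) (γ : List (List ℕ)) :
    IsStandardKleshchev r (fstar f) γ ↔
      γ.length = f.length ∧ IsMultipartition r γ ∧ [] ∉ γ ∧
        (f.reverse.zip γ).IsChain fun x y => KleshchevBoundary (y.1 - x.1) x.2 y.2 := by
  rw [isStandardKleshchev_iff, fstar, ← List.map_reverse, List.zip_map_left, List.isChain_map]
  simp only [List.length_reverse, List.length_map, Prod.map_fst, Prod.map_snd, id, sub_neg_eq_add,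
    neg_add_eq_sub]

lemma isChain_flatten_stdLE_iff {L : List (List Seg)}
    (hL : ∀ B ∈ L, B ≠ [] ∧ B.IsChain ChainStep) :
    L.flatten.IsChain StdLE ↔
      L.IsChain fun B C => ∀ p ∈ B.getLast?, ∀ q ∈ C.head?, StdLE p q := by
  rw [List.isChain_flatten fun h => (hL [] h).1 rfl]
  exact and_iff_right fun B hB => (hL B hB).2.imp fun _ _ => ChainStep.stdLE

lemma isChain_junction_blockOf_iff {P : List (ℤ × List ℕ)} (hP : ∀ x ∈ P, x.2 ≠ []) :
    (P.map (Function.uncurry blockOf)).IsChain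
        (fun B C => (∀ p ∈ B.getLast?, ∀ q ∈ C.head?, StdLE p q) ∧
          ∀ p ∈ B.getLast?, ∀ q ∈ C.head?, ¬ ChainStep p q) ↔
      P.IsChain fun x y => KleshchevBoundary (y.1 - x.1) x.2 y.2 := by
  rw [List.isChain_map]
  exact List.IsChain.iff_of_mem_imp fun x y hx hy =>
    junction_blockOf_iff x.1 y.1 (hP x hx) (hP y hy)

theorem isStandardWord_flatten_blockOf_iff (r : ℕ) {P : List (ℤ × List ℕ)}
    (hP : ∀ x ∈ P, x.2 ≠ [] ∧ IsPartition x.2) :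
    IsStandardWord r (P.map (Function.uncurry blockOf)).flatten ∧
        IsBlockDecomp (P.map (Function.uncurry blockOf)) ↔
      P ≠ [] ∧ IsMultipartition r (P.map Prod.snd) ∧
        P.IsChain fun x y => KleshchevBoundary (y.1 - x.1) x.2 y.2 := by
  set L := P.map (Function.uncurry blockOf)
  have hL : ∀ B ∈ L, B ≠ [] ∧ B.IsChain ChainStep := by
    simp only [L, List.forall_mem_map]
    exact fun x hx => ⟨blockOf_eq_nil_iff.not.mpr (hP x hx).1,
      isChain_blockOf _ (hP x hx).2.1.isChain⟩
  have hne : L.flatten ≠ [] ↔ P ≠ [] := by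
    refine not_congr ⟨fun h => ?_, fun h => by simp [L, h]⟩
    rw [List.flatten_eq_nil_iff] at h
    by_contra hP'
    obtain ⟨x, hx⟩ := List.exists_mem_of_ne_nil P hP'
    exact (hL _ (List.mem_map_of_mem hx)).1 (h _ (List.mem_map_of_mem hx))
  have hproper : ∀ s ∈ L.flatten, s.1 ≤ s.2 := by
    simp only [L, List.mem_flatten, List.mem_map]
    rintro s ⟨_, ⟨x, hx, rfl⟩, hs⟩
    exact le_of_mem_blockOf (hP x hx).2.2 hs
  have hsum : (L.flatten.map segLen).sum = (((P.map Prod.snd).map List.sum).sum : ℤ) := by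
    simp [L, List.map_flatten, List.sum_flatten, Function.comp_def, Function.uncurry,
      map_segLen_blockOf, Nat.cast_list_sum]
  have hpart : ∀ g ∈ P.map Prod.snd, IsPartition g := by
    simpa only [List.forall_mem_map] using fun x hx => (hP x hx).2
  rw [isStandardWord_iff, IsBlockDecomp, isChain_flatten_stdLE_iff hL,
    ← isChain_junction_blockOf_iff fun x hx => (hP x hx).1, List.isChain_and_iff, hne, hsum,
    IsMultipartition]
  simp only [Nat.cast_inj]
  tauto

lemma gammaOf_eq_map_segLengths (w : List Seg) : gammaOf w = (blocks w).map segLengths := rfl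

lemma wordOf_eq_flatten {f : List ℤ} {γ : List (List ℕ)} (h : γ.length ≤ f.length) :
    wordOf f γ = ((f.reverse.zip γ).map (Function.uncurry blockOf)).flatten := by
  rw [wordOf]
  congr 1
  apply List.ext_getElem
  · simp [h]
  · intro i h₁ h₂
    simp only [List.length_map, List.length_range] at h₁
    simp only [List.getElem_map, List.getElem_range, List.getElem_zip, List.getElem_reverse,
      Function.uncurry, blockOf_eq_map_range, List.getD_eq_getElem _ _ h₁,
      List.getD_eq_getElem _ _ (show f.length - 1 - i < f.length by omega)]

lemma mem_of_mem_blocks {w B : List Seg} {s : Seg} (hB : B ∈ blocks w) (hs : s ∈ B) : s ∈ w :=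
  flatten_blocks w ▸ List.mem_flatten.mpr ⟨B, hB, hs⟩

lemma map_blockOf_headI_segLengths {w : List Seg} (hw : ∀ s ∈ w, s.1 ≤ s.2) :
    ((blocks w).map fun B => (B.headI.2, segLengths B)).map (Function.uncurry blockOf) =
      blocks w := by
  rw [List.map_map]
  refine (List.map_congr_left fun B hB => ?_).trans (List.map_id _)
  obtain ⟨hne, hc⟩ := (isBlockDecomp_blocks w).1 B hB
  exact blockOf_headI_segLengths hne hc fun s hs => hw s (mem_of_mem_blocks hB hs)

lemma wordOf_fOf_gammaOf {w : List Seg} (hw : ∀ s ∈ w, s.1 ≤ s.2) :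
    wordOf (fOf w) (gammaOf w) = w := by
  rw [wordOf_eq_flatten (by simp [fOf, gammaOf]), fOf, List.reverse_reverse,
    gammaOf_eq_map_segLengths, List.zip_map', map_blockOf_headI_segLengths hw, flatten_blocks]

lemma isStandardKleshchev_gammaOf {r : ℕ} {w : List Seg} (hw : IsStandardWord r w) :
    IsStandardKleshchev r (fstar (fOf w)) (gammaOf w) := by
  set P := (blocks w).map fun B => (B.headI.2, segLengths B)
  have hP : ∀ x ∈ P, x.2 ≠ [] ∧ IsPartition x.2 := by
    simp only [P, List.forall_mem_map]
    intro B hB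
    obtain ⟨hne, hc⟩ := (isBlockDecomp_blocks w).1 B hB
    exact ⟨by simpa [segLengths] using hne,
      isPartition_segLengths hc fun s hs => hw.2.1 s (mem_of_mem_blocks hB hs)⟩
  obtain ⟨-, hmult, hchain⟩ := (isStandardWord_flatten_blockOf_iff r hP).mp <| by
    rw [map_blockOf_headI_segLengths hw.2.1, flatten_blocks]
    exact ⟨hw, isBlockDecomp_blocks w⟩
  have hsnd : P.map Prod.snd = gammaOf w := by simp [P, gammaOf_eq_map_segLengths]
  have hzip : (fOf w).reverse.zip (gammaOf w) = P := by
    rw [fOf, List.reverse_reverse, gammaOf_eq_map_segLengths, List.zip_map']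
  rw [isStandardKleshchev_fstar_iff, hzip, ← hsnd]
  refine ⟨by simp [fOf, P], hmult, fun h => ?_, hchain⟩
  obtain ⟨x, hx, hx₂⟩ := List.mem_map.mp h
  exact (hP x hx).1 hx₂

lemma isStandardWord_wordOf_and_fOf_and_gammaOf {r : ℕ} {f : List ℤ} (hne : f ≠ [])
    {γ : List (List ℕ)} (hγ : IsStandardKleshchev r (fstar f) γ) :
    IsStandardWord r (wordOf f γ) ∧ fOf (wordOf f γ) = f ∧ gammaOf (wordOf f γ) = γ := by
  obtain ⟨hlen, hmult, hnil, hchain⟩ := (isStandardKleshchev_fstar_iff r f γ).mp hγ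
  set P := f.reverse.zip γ
  have hfst : P.map Prod.fst = f.reverse := List.map_fst_zip (by simp [hlen])
  have hsnd : P.map Prod.snd = γ := List.map_snd_zip (by simp [hlen])
  have hP : ∀ x ∈ P, x.2 ≠ [] ∧ IsPartition x.2 := fun x hx =>
    have hxγ := (List.of_mem_zip hx).2
    ⟨fun h => hnil (h ▸ hxγ), hmult.1 _ hxγ⟩
  have hPne : P ≠ [] :=
    List.ne_nil_of_length_pos (by simpa [P, hlen] using List.length_pos_iff.mpr hne)
  obtain ⟨hstd, hdecomp⟩ :=
    (isStandardWord_flatten_blockOf_iff r hP).mpr ⟨hPne, hsnd ▸ hmult, hchain⟩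
  have hword := wordOf_eq_flatten hlen.le
  have hblocks : blocks (wordOf f γ) = P.map (Function.uncurry blockOf) := by
    rw [hword, blocks_flatten hdecomp]
  refine ⟨hword ▸ hstd, ?_, ?_⟩
  · rw [fOf, hblocks, List.map_map, List.reverse_eq_iff, ← hfst]
    exact List.map_congr_left fun x hx => headI_blockOf_snd x.1 (hP x hx).1
  · rw [gammaOf_eq_map_segLengths, hblocks, List.map_map, ← hsnd]
    exact List.map_congr_left fun x _ => segLengths_blockOf x.1 x.2

theorem gammaOf_bijOn_general (r : ℕ) (f : List ℤ) (hne : f ≠ []) :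
    Set.BijOn gammaOf {w | IsStandardWord r w ∧ fOf w = f}
      {γ | IsStandardKleshchev r (fstar f) γ} := by
  refine ⟨?_, ?_, ?_⟩
  · rintro w ⟨hw, rfl⟩
    exact isStandardKleshchev_gammaOf hw
  · rintro w₁ ⟨hw₁, rfl⟩ w₂ ⟨hw₂, hf⟩ h
    rw [← wordOf_fOf_gammaOf hw₁.2.1, ← wordOf_fOf_gammaOf hw₂.2.1, h, hf]
  · intro γ hγ
    obtain ⟨hw, hf, hγ'⟩ := isStandardWord_wordOf_and_fOf_and_gammaOf hne hγ
    exact ⟨wordOf f γ, ⟨hw, hf⟩, hγ'⟩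

/-- For each weakly decreasing integer tuple `f = (f_1, …, f_m)`, the map
`w ↦ γ̲_w` is a bijection from the set of standard words of total length `r` with `f_w = f`
onto the set of standard Kleshchev multipartitions of `r` relative to `f*`. -/
theorem gammaOf_bijOn (r : ℕ) (f : List ℤ) (hne : f ≠ []) (hf : f.Pairwise (· ≥ ·)) :
    Set.BijOn gammaOf {w | IsStandardWord r w ∧ fOf w = f}
      {γ | IsStandardKleshchev r (fstar f) γ} :=
  gammaOf_bijOn_general r f hne
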